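/- arXiv:2003.05157 — 3 statements merged into one kernel-verified Lean document; each statement's English description precedes it below -/
import Mathlib

section
/- Let U₁ > 0 and U₂ be random variables with joint moment generating function M(t₁,t₂) = E[exp(t₁U₁ + t₂U₂)] finite in a neighborhood of the relevant domain. Then for positive integers j, k, E[U₂^j / U₁^k] = (1/Γ(k)) ∫₀^∞ t₁^{k-1} lim_{t₂→0⁻} ∂^j/∂t₂^j M(-t₁, t₂) dt₁, provided the expectation exists. -/
/-!
For `u > 0`, `Γ(k) / u ^ k = ∫₀^∞ t^(k-1) e^(-t u) dt`, so by Fubini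
`E[U₂^j / U₁^k] = Γ(k)⁻¹ ∫₀^∞ t^(k-1) E[U₂^j e^(-t U₁)] dt`. For fixed `t > 0`, `s ↦ M(-t, s)` is
the moment generating function of `U₂` under the measure with density `e^(-t U₁)`; it is finite
for `s ≤ 0`, so for `s < 0` its `j`-th derivative is `E[U₂^j e^(-t U₁ + s U₂)]`, and this tends to
`E[U₂^j e^(-t U₁)]` as `s → 0⁻` by dominated convergence. This applies because
`u ^ k e^(-t u)` is bounded, so `|U₂^j e^(-t U₁)|` is dominated by a multiple of `|U₂^j / U₁^k|`.
-/

open MeasureTheory Filter Real Set ProbabilityTheory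
open scoped Topology Nat

lemma pow_pred_mul_exp_neg_mul_eq_rpow {k : ℕ} (hk : 0 < k) (u t : ℝ) :
    t ^ (k - 1) * exp (-t * u) = t ^ ((k : ℝ) - 1) * exp (-(u * t ^ (1 : ℝ))) := by
  rw [← Nat.cast_pred hk, rpow_natCast, rpow_one, neg_mul, mul_comm u]

lemma integrableOn_Ioi_pow_mul_exp_neg_mul {k : ℕ} (hk : 0 < k) {u : ℝ} (hu : 0 < u) :
    IntegrableOn (fun t : ℝ => t ^ (k - 1) * exp (-t * u)) (Ioi 0) := by
  simp_rw [pow_pred_mul_exp_neg_mul_eq_rpow hk, ← neg_mul]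
  exact integrableOn_rpow_mul_exp_neg_mul_rpow (by simp [hk]) one_pos hu

lemma integral_Ioi_pow_mul_exp_neg_mul {k : ℕ} (hk : 0 < k) {u : ℝ} (hu : 0 < u) :
    ∫ t in Ioi 0, t ^ (k - 1) * exp (-t * u) = Gamma k / u ^ k := by
  simp_rw [pow_pred_mul_exp_neg_mul_eq_rpow hk, rpow_one,
    integral_rpow_mul_exp_neg_mul_Ioi (Nat.cast_pos.2 hk) hu, rpow_natCast]
  ring

lemma pow_mul_exp_neg_mul_le {u t : ℝ} (hu : 0 ≤ u) (ht : 0 < t) (k : ℕ) :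
    u ^ k * exp (-t * u) ≤ k ! / t ^ k := by
  have h := pow_div_factorial_le_exp (x := t * u) (by positivity) k
  rw [div_le_iff₀ (by positivity), mul_pow] at h
  rw [le_div_iff₀ (by positivity), neg_mul, exp_neg]
  calc u ^ k * (exp (t * u))⁻¹ * t ^ k = t ^ k * u ^ k * (exp (t * u))⁻¹ := by ring
    _ ≤ exp (t * u) * k ! * (exp (t * u))⁻¹ := by gcongr
    _ = k ! := by field_simp

lemma exp_mul_le_exp_mul_add_one {a s : ℝ} (has : a ≤ s) (hs : s ≤ 0) (x : ℝ) :
    exp (s * x) ≤ exp (a * x) + 1 := by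
  rcases le_total 0 x with hx | hx
  · exact (exp_le_one_iff.2 (mul_nonpos_of_nonpos_of_nonneg hs hx)).trans
      (le_add_of_nonneg_left (exp_pos _).le)
  · exact (exp_le_exp.2 (mul_le_mul_of_nonpos_right has hx)).trans
      (le_add_of_nonneg_right zero_le_one)

section

variable {Ω : Type*} [MeasurableSpace Ω] {μ : Measure Ω} {g U V : Ω → ℝ}

lemma integral_div_pow_eq_integral_Ioi [SFinite μ] (hg : Measurable g) (hU : Measurable U)
    (hUpos : ∀ ω, 0 < U ω) {k : ℕ} (hk : 0 < k) (hint : Integrable (fun ω => g ω / U ω ^ k) μ) :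
    ∫ ω, g ω / U ω ^ k ∂μ =
      (Gamma k)⁻¹ * ∫ t in Ioi 0, t ^ (k - 1) * ∫ ω, exp (-t * U ω) * g ω ∂μ := by
  set F : Ω → ℝ → ℝ := fun ω t => t ^ (k - 1) * exp (-t * U ω) * g ω
  have integral_F (c : Ω → ℝ) (ω : Ω) :
      ∫ t in Ioi 0, t ^ (k - 1) * exp (-t * U ω) * c ω = Gamma k * (c ω / U ω ^ k) := by
    rw [integral_mul_const, integral_Ioi_pow_mul_exp_neg_mul hk (hUpos ω)]
    ring
  have hF : Integrable (Function.uncurry F) (μ.prod (volume.restrict (Ioi 0))) := by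
    refine (integrable_prod_iff ?_).2 ⟨.of_forall fun ω =>
      (integrableOn_Ioi_pow_mul_exp_neg_mul hk (hUpos ω)).mul_const (g ω), ?_⟩
    · exact Measurable.aestronglyMeasurable (by fun_prop)
    refine (hint.norm.const_mul (Gamma k)).congr (.of_forall fun ω => ?_)
    change Gamma k * ‖g ω / U ω ^ k‖ = ∫ t in Ioi 0, ‖F ω t‖
    rw [Real.norm_eq_abs, abs_div, abs_of_pos (pow_pos (hUpos ω) k),
      ← integral_F (fun ω => |g ω|)]
    refine setIntegral_congr_fun measurableSet_Ioi fun t (ht : 0 < t) => ?_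
    simp only [F, norm_mul, norm_pow, Real.norm_of_nonneg ht.le,
      Real.norm_of_nonneg (exp_pos _).le, Real.norm_eq_abs]
  calc ∫ ω, g ω / U ω ^ k ∂μ
      = (Gamma k)⁻¹ * ∫ ω, (∫ t in Ioi 0, F ω t) ∂μ := by
        simp only [F, integral_F, integral_const_mul]
        field_simp [(Gamma_pos_of_pos (Nat.cast_pos.2 hk)).ne']
    _ = _ := by
        rw [integral_integral_swap hF]
        simp only [F, mul_assoc, integral_const_mul]

lemma integrable_exp_neg_mul_mul_of_integrable_div_pow (hU : Measurable U)
    (hUpos : ∀ ω, 0 < U ω) {k : ℕ} (hint : Integrable (fun ω => g ω / U ω ^ k) μ)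
    {t : ℝ} (ht : 0 < t) :
    Integrable (fun ω => exp (-t * U ω) * g ω) μ := by
  refine (hint.bdd_mul (c := k ! / t ^ k) (f := fun ω => U ω ^ k * exp (-t * U ω))
    (by fun_prop) (.of_forall fun ω => ?_)).congr (.of_forall fun ω => ?_)
  · rw [Real.norm_of_nonneg (mul_nonneg (pow_nonneg (hUpos ω).le k) (exp_pos _).le)]
    exact pow_mul_exp_neg_mul_le (hUpos ω).le ht k
  · field_simp [(hUpos ω).ne']

lemma tendsto_iteratedDeriv_mgf_nhdsLT_zero {X : Ω → ℝ} (hX : Iio 0 ⊆ integrableExpSet X μ)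
    {n : ℕ} (hn : Integrable (fun ω => X ω ^ n) μ) :
    Tendsto (iteratedDeriv n (mgf X μ)) (𝓝[<] 0) (𝓝 μ[fun ω => X ω ^ n]) := by
  have hX' : Iio 0 ⊆ interior (integrableExpSet X μ) := interior_maximal hX isOpen_Iio
  have h_neg_one : (-1 : ℝ) ∈ interior (integrableExpSet X μ) := hX' (by norm_num)
  have hXmeas : AEMeasurable X μ := aemeasurable_of_mem_interior_integrableExpSet h_neg_one
  refine (tendsto_congr' (eventually_nhdsWithin_of_forall
    fun s hs => (iteratedDeriv_mgf (hX' hs) n).symm)).1 ?_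
  refine tendsto_integral_filter_of_dominated_convergence
    (fun ω => |X ω| ^ n * exp (-1 * X ω) + ‖X ω ^ n‖)
    (.of_forall fun s => by fun_prop) ?_
    ((integrable_pow_abs_mul_exp_of_mem_interior_integrableExpSet h_neg_one n).add hn.norm)
    (.of_forall fun ω => ?_)
  · filter_upwards [Ioo_mem_nhdsLT (by norm_num : (-1 : ℝ) < 0)] with s hs
    refine .of_forall fun ω => ?_
    rw [norm_mul, norm_pow, Real.norm_eq_abs, Real.norm_of_nonneg (exp_pos _).le]
    calc |X ω| ^ n * exp (s * X ω) ≤ |X ω| ^ n * (exp (-1 * X ω) + 1) := by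
          gcongr; exact exp_mul_le_exp_mul_add_one hs.1.le hs.2.le _
      _ = |X ω| ^ n * exp (-1 * X ω) + |X ω| ^ n := by ring
  · have h := ((by fun_prop : Continuous fun s => X ω ^ n * exp (s * X ω)).tendsto 0).mono_left
      (nhdsWithin_le_nhds (s := Iio 0))
    simpa using h

noncomputable def withExpDensity (μ : Measure Ω) (V : Ω → ℝ) : Measure Ω :=
  μ.withDensity fun ω => ENNReal.ofReal (exp (V ω))

lemma integral_withExpDensity (hV : Measurable V) (g : Ω → ℝ) :
    ∫ ω, g ω ∂(withExpDensity μ V) = ∫ ω, exp (V ω) * g ω ∂μ := by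
  have hf : Measurable fun ω => (exp (V ω)).toNNReal := by fun_prop
  simp only [withExpDensity, ENNReal.ofReal, integral_withDensity_eq_integral_smul hf,
    NNReal.smul_def, Real.coe_toNNReal _ (exp_pos _).le, smul_eq_mul]

lemma integrable_withExpDensity_iff (hV : Measurable V) {g : Ω → ℝ} :
    Integrable g (withExpDensity μ V) ↔ Integrable (fun ω => exp (V ω) * g ω) μ := by
  have hf : Measurable fun ω => (exp (V ω)).toNNReal := by fun_prop
  simp only [withExpDensity, ENNReal.ofReal, integrable_withDensity_iff_integrable_smul hf,
    NNReal.smul_def, Real.coe_toNNReal _ (exp_pos _).le, smul_eq_mul]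

lemma mgf_withExpDensity (hV : Measurable V) (W : Ω → ℝ) (s : ℝ) :
    mgf W (withExpDensity μ V) s = ∫ ω, exp (V ω + s * W ω) ∂μ := by
  simp only [mgf, integral_withExpDensity hV, exp_add]

end

theorem moment_ratio_via_mgf_general
    {Ω : Type*} [MeasurableSpace Ω] (P : Measure Ω) [IsProbabilityMeasure P]
    (U₁ U₂ : Ω → ℝ) (hU₁meas : Measurable U₁) (hU₂meas : Measurable U₂)
    (hU₁pos : ∀ ω, 0 < U₁ ω)
    (j k : ℕ) (hk : 0 < k)
    (M : ℝ → ℝ → ℝ)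
    (hM : ∀ t₁ t₂, M t₁ t₂ = ∫ ω, Real.exp (t₁ * U₁ ω + t₂ * U₂ ω) ∂P)
    -- finiteness of the MGF on the relevant domain
    (hMfin : ∀ t₁ > (0 : ℝ), ∀ t₂ ≤ (0 : ℝ),
      Integrable (fun ω => Real.exp (-t₁ * U₁ ω + t₂ * U₂ ω)) P)
    -- the expectation of interest exists
    (hInt : Integrable (fun ω => U₂ ω ^ j / U₁ ω ^ k) P)
    -- L t₁ is the limit as t₂ → 0⁻ of the j-th partial derivative ∂^j/∂t₂^j M(-t₁, t₂)
    (L : ℝ → ℝ)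
    (hL : ∀ t₁ ∈ Set.Ioi (0 : ℝ),
      Tendsto (fun t₂ => iteratedDeriv j (fun s => M (-t₁) s) t₂)
        (nhdsWithin 0 (Set.Iio 0)) (nhds (L t₁))) :
    ∫ ω, U₂ ω ^ j / U₁ ω ^ k ∂P =
      (1 / Real.Gamma k) * ∫ t₁ in Set.Ioi (0 : ℝ), t₁ ^ (k - 1) * L t₁ := by
  have hL_eq : ∀ t ∈ Ioi (0 : ℝ), L t = ∫ ω, exp (-t * U₁ ω) * U₂ ω ^ j ∂P := by
    intro t ht
    have hV : Measurable fun ω => -t * U₁ ω := by fun_prop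
    set ν := withExpDensity P fun ω => -t * U₁ ω
    have hM_eq : (fun s => M (-t) s) = mgf U₂ ν :=
      funext fun s => by rw [hM, mgf_withExpDensity hV]
    have hexp : Iio 0 ⊆ integrableExpSet U₂ ν := fun s hs =>
      (integrable_withExpDensity_iff hV).2 (by simpa only [← exp_add] using hMfin t ht s hs.le)
    have hmom : Integrable (fun ω => U₂ ω ^ j) ν :=
      (integrable_withExpDensity_iff hV).2
        (integrable_exp_neg_mul_mul_of_integrable_div_pow hU₁meas hU₁pos hInt ht)
    rw [← integral_withExpDensity hV]
    exact tendsto_nhds_unique (hL t ht) (hM_eq ▸ tendsto_iteratedDeriv_mgf_nhdsLT_zero hexp hmom)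
  rw [integral_div_pow_eq_integral_Ioi (hU₂meas.pow_const j) hU₁meas hU₁pos hk hInt, one_div]
  exact congrArg _ (setIntegral_congr_fun measurableSet_Ioi fun t ht => by rw [hL_eq t ht])

/-- Lemma on moments of ratios via the joint moment generating function. -/
theorem moment_ratio_via_mgf
    {Ω : Type*} [MeasurableSpace Ω] (P : Measure Ω) [IsProbabilityMeasure P]
    (U₁ U₂ : Ω → ℝ) (hU₁meas : Measurable U₁) (hU₂meas : Measurable U₂)
    (hU₁pos : ∀ ω, 0 < U₁ ω)
    (j k : ℕ) (hj : 0 < j) (hk : 0 < k)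
    (M : ℝ → ℝ → ℝ)
    (hM : ∀ t₁ t₂, M t₁ t₂ = ∫ ω, Real.exp (t₁ * U₁ ω + t₂ * U₂ ω) ∂P)
    -- finiteness of the MGF on the relevant domain
    (hMfin : ∀ t₁ > (0 : ℝ), ∀ t₂ ≤ (0 : ℝ),
      Integrable (fun ω => Real.exp (-t₁ * U₁ ω + t₂ * U₂ ω)) P)
    -- the expectation of interest exists
    (hInt : Integrable (fun ω => U₂ ω ^ j / U₁ ω ^ k) P)
    -- L t₁ is the limit as t₂ → 0⁻ of the j-th partial derivative ∂^j/∂t₂^j M(-t₁, t₂)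
    (L : ℝ → ℝ)
    (hL : ∀ t₁ ∈ Set.Ioi (0 : ℝ),
      Tendsto (fun t₂ => iteratedDeriv j (fun s => M (-t₁) s) t₂)
        (nhdsWithin 0 (Set.Iio 0)) (nhds (L t₁))) :
    ∫ ω, U₂ ω ^ j / U₁ ω ^ k ∂P =
      (1 / Real.Gamma k) * ∫ t₁ in Set.Ioi (0 : ℝ), t₁ ^ (k - 1) * L t₁ :=
  moment_ratio_via_mgf_general P U₁ U₂ hU₁meas hU₂meas hU₁pos j k hk M hM hMfin hInt L hL
end

section
/- The function g_bessel(φ) = (1 − φ + φ² e^φ Ei(φ))/2, with Ei(φ) = ∫₁^∞ u^{−1} e^{−φu} du, is strictly decreasing on (0, ∞). -/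
/-!
Substituting `u = 1 + t / φ` turns `e^φ Ei(φ)` into `∫₀^∞ e^{-t} / (φ + t) dt`. Splitting
`φ² / (φ + t) = φ - t + t² / (φ + t)` and using `∫₀^∞ e^{-t} = ∫₀^∞ t e^{-t} = 1` gives
`1 - φ + φ² e^φ Ei(φ) = ∫₀^∞ t² e^{-t} / (φ + t) dt`, the Stieltjes transform of a positive
integrable weight, which is strictly decreasing in `φ > 0`.
-/

open MeasureTheory

/-- Exponential integral function Ei(φ) = ∫₁^∞ u⁻¹ e^{-φu} du. -/
noncomputable def expInt (φ : ℝ) : ℝ :=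
  ∫ u in Set.Ioi (1 : ℝ), u⁻¹ * Real.exp (-φ * u)

open Set Real

section ChangeOfVariables

variable {E : Type*} [NormedAddCommGroup E] [NormedSpace ℝ E]

theorem integral_comp_add_right_Ioi (g : ℝ → E) (a c : ℝ) :
    ∫ x in Ioi a, g (x + c) = ∫ x in Ioi (a + c), g x := by
  have h := (measurePreserving_add_right (volume : Measure ℝ) c).setIntegral_preimage_emb
    (MeasurableEquiv.addRight c).measurableEmbedding g (Ioi (a + c))
  simpa [MeasurableEquiv.addRight, preimage_add_const_Ioi] using h

theorem integral_comp_mul_add_Ioi (g : ℝ → E) (a c : ℝ) {b : ℝ} (hb : 0 < b) :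
    ∫ x in Ioi a, g (b * x + c) = b⁻¹ • ∫ x in Ioi (b * a + c), g x := by
  rw [integral_comp_mul_left_Ioi (fun x => g (x + c)) a hb, integral_comp_add_right_Ioi]

end ChangeOfVariables

theorem integrableOn_pow_mul_exp_neg_Ioi (n : ℕ) :
    IntegrableOn (fun t : ℝ => t ^ n * exp (-t)) (Ioi 0) := by
  refine (GammaIntegral_convergent (s := n + 1) (by positivity)).congr_fun
    (fun t _ => ?_) measurableSet_Ioi
  simp only [add_sub_cancel_right, rpow_natCast, mul_comm]

theorem integral_pow_mul_exp_neg_Ioi (n : ℕ) :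
    ∫ t in Ioi (0 : ℝ), t ^ n * exp (-t) = n.factorial := by
  rw [← Gamma_nat_eq_factorial, Gamma_eq_integral (by positivity)]
  refine setIntegral_congr_fun measurableSet_Ioi fun t _ => ?_
  simp only [add_sub_cancel_right, rpow_natCast, mul_comm]

theorem setIntegral_pos_of_forall_pos {α : Type*} [MeasurableSpace α] {μ : Measure α}
    {s : Set α} {f : α → ℝ} (hs : MeasurableSet s) (hμs : μ s ≠ 0) (hf : IntegrableOn f s μ)
    (hpos : ∀ x ∈ s, 0 < f x) : 0 < ∫ x in s, f x ∂μ := by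
  rw [setIntegral_pos_iff_support_of_nonneg_ae
    (ae_restrict_of_forall_mem hs fun x hx => (hpos x hx).le) hf]
  exact (pos_iff_ne_zero.2 hμs).trans_le (measure_mono fun x hx => ⟨(hpos x hx).ne', hx⟩)

section Stieltjes

variable {w : ℝ → ℝ}

theorem integrableOn_div_add_Ioi (hw : IntegrableOn w (Ioi 0)) {φ : ℝ} (hφ : 0 < φ) :
    IntegrableOn (fun s => w s / (φ + s)) (Ioi 0) := by
  have hden : Measurable fun s : ℝ => (φ + s)⁻¹ := by fun_prop
  refine (hw.norm.div_const φ).mono' (hw.aestronglyMeasurable.mul hden.aestronglyMeasurable) ?_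
  filter_upwards [ae_restrict_mem measurableSet_Ioi] with s hs
  have hs : 0 < s := hs
  rw [norm_div, Real.norm_of_nonneg (show 0 ≤ φ + s by linarith)]
  exact div_le_div_of_nonneg_left (norm_nonneg (w s)) hφ (by linarith)

theorem strictAntiOn_integral_div_add_Ioi (hw : IntegrableOn w (Ioi 0))
    (hpos : ∀ s > 0, 0 < w s) :
    StrictAntiOn (fun φ => ∫ s in Ioi 0, w s / (φ + s)) (Ioi 0) := by
  intro a (ha : 0 < a) b (hb : 0 < b) hab
  have hwa := integrableOn_div_add_Ioi hw ha
  have hwb := integrableOn_div_add_Ioi hw hb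
  rw [← sub_pos, ← integral_sub hwa hwb]
  refine setIntegral_pos_of_forall_pos measurableSet_Ioi (by simp) (hwa.sub hwb) fun s hs => ?_
  have hs : 0 < s := hs
  exact sub_pos.2 (div_lt_div_of_pos_left (hpos s hs) (by linarith) (by linarith))

end Stieltjes

theorem exp_mul_expInt {φ : ℝ} (hφ : 0 < φ) :
    exp φ * expInt φ = ∫ t in Ioi 0, exp (-t) / (φ + t) := by
  have h := integral_comp_mul_add_Ioi (fun u => u⁻¹ * exp (-φ * u)) 0 1 (inv_pos.2 hφ)
  rw [mul_zero, zero_add, inv_inv, smul_eq_mul, ← expInt] at h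
  calc exp φ * expInt φ = φ⁻¹ * exp φ * (φ * expInt φ) := by field_simp
    _ = ∫ t in Ioi 0, φ⁻¹ * exp φ * ((φ⁻¹ * t + 1)⁻¹ * exp (-φ * (φ⁻¹ * t + 1))) := by
      rw [← h, integral_const_mul]
    _ = ∫ t in Ioi 0, exp (-t) / (φ + t) := by
      refine setIntegral_congr_fun measurableSet_Ioi fun t (ht : 0 < t) => ?_
      rw [show -φ * (φ⁻¹ * t + 1) = -t + -φ by field_simp; ring, exp_add, exp_neg φ]
      field_simp
      ring

theorem one_sub_add_sq_mul_exp_mul_expInt {φ : ℝ} (hφ : 0 < φ) :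
    1 - φ + φ ^ 2 * exp φ * expInt φ = ∫ s in Ioi 0, s ^ 2 * exp (-s) / (φ + s) := by
  have h0 := (integrableOn_pow_mul_exp_neg_Ioi 0).const_mul φ
  have h1 := integrableOn_pow_mul_exp_neg_Ioi 1
  have h2 := integrableOn_div_add_Ioi (integrableOn_pow_mul_exp_neg_Ioi 2) hφ
  have split : ∫ s in Ioi 0, φ ^ 2 * (exp (-s) / (φ + s))
      = (φ * ∫ s in Ioi 0, s ^ 0 * exp (-s)) - (∫ s in Ioi 0, s ^ 1 * exp (-s))
          + ∫ s in Ioi 0, s ^ 2 * exp (-s) / (φ + s) := by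
    rw [← integral_const_mul, ← integral_sub h0 h1, ← integral_add (h0.sub' h1) h2]
    refine setIntegral_congr_fun measurableSet_Ioi fun s (hs : 0 < s) => ?_
    field_simp
    ring
  rw [mul_assoc, exp_mul_expInt hφ, ← integral_const_mul, split,
    integral_pow_mul_exp_neg_Ioi, integral_pow_mul_exp_neg_Ioi]
  simp only [Nat.factorial_zero, Nat.factorial_one, Nat.cast_one]
  ring

/-- g_bessel is strictly decreasing on (0, ∞). -/
theorem g_bessel_strictAnti :
    StrictAntiOn (fun φ : ℝ => (1 - φ + φ ^ 2 * Real.exp φ * expInt φ) / 2)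
      (Set.Ioi 0) := by
  have hF := strictAntiOn_integral_div_add_Ioi (integrableOn_pow_mul_exp_neg_Ioi 2)
    fun s hs => by positivity
  intro a ha b hb hab
  simp only [one_sub_add_sq_mul_exp_mul_expInt ha, one_sub_add_sq_mul_exp_mul_expInt hb]
  linarith [hF ha hb hab]
end

section
/- For every φ > 0, g_bessel(φ) = (1 − φ + φ² e^φ Ei(φ))/2 > 0; equivalently, φ² e^φ Ei(φ) > φ − 1, where Ei(φ) = ∫₁^∞ u^{−1} e^{−φu} du. -/
open MeasureTheory

/-!
Since `u ≤ e^{u-1}`, the weight `u⁻¹` dominates `e^{1-u}` on `(1, ∞)`, so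
`Ei(φ) ≥ e ∫₁^∞ e^{-(1+φ)u} du = e^{-φ}/(1+φ)`. Hence `φ² e^φ Ei(φ) ≥ φ²/(1+φ) > φ - 1`,
the last step being `φ² > φ² - 1`.
-/

open Set Real

lemma exp_one_sub_le_inv {u : ℝ} (hu : 0 < u) : exp (1 - u) ≤ u⁻¹ := by
  have h : u ≤ exp (u - 1) := by linarith [add_one_le_exp (u - 1)]
  rw [← neg_sub, exp_neg]
  exact inv_anti₀ hu h

lemma integrableOn_inv_mul_exp_neg_mul_Ioi {c φ : ℝ} (hc : 0 < c) (hφ : 0 < φ) :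
    IntegrableOn (fun u : ℝ => u⁻¹ * exp (-φ * u)) (Ioi c) := by
  refine ((exp_neg_integrableOn_Ioi c hφ).const_mul c⁻¹).mono' (by fun_prop) ?_
  filter_upwards [ae_restrict_mem measurableSet_Ioi] with u (hu : c < u)
  rw [norm_mul, norm_inv, norm_of_nonneg (hc.trans hu).le, norm_of_nonneg (exp_pos _).le,
    neg_mul]
  gcongr

lemma exp_neg_div_one_add_le_expInt {φ : ℝ} (hφ : 0 < φ) :
    exp (-φ) / (1 + φ) ≤ expInt φ := by
  have hrate : -(1 + φ) < 0 := by linarith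
  have hlower : ∫ u in Ioi (1 : ℝ), exp 1 * exp (-(1 + φ) * u) = exp (-φ) / (1 + φ) := by
    rw [integral_const_mul, integral_exp_mul_Ioi hrate, neg_div_neg_eq, mul_div_assoc',
      ← exp_add]
    ring_nf
  rw [← hlower, expInt]
  refine setIntegral_mono_on ((integrableOn_exp_mul_Ioi hrate 1).const_mul _)
    (integrableOn_inv_mul_exp_neg_mul_Ioi one_pos hφ) measurableSet_Ioi fun u (hu : 1 < u) => ?_
  calc exp 1 * exp (-(1 + φ) * u) = exp (1 - u) * exp (-φ * u) := by
        rw [← exp_add, ← exp_add]; ring_nf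
    _ ≤ u⁻¹ * exp (-φ * u) := by gcongr; exact exp_one_sub_le_inv (one_pos.trans hu)

/-- For every φ > 0, g_bessel(φ) > 0, i.e. φ² e^φ Ei(φ) > φ − 1. -/
theorem g_bessel_pos (φ : ℝ) (hφ : 0 < φ) :
    0 < (1 - φ + φ ^ 2 * Real.exp φ * expInt φ) / 2 ∧
    φ - 1 < φ ^ 2 * Real.exp φ * expInt φ := by
  have hbound : φ ^ 2 / (1 + φ) ≤ φ ^ 2 * exp φ * expInt φ := by
    calc φ ^ 2 / (1 + φ) = φ ^ 2 * exp φ * (exp (-φ) / (1 + φ)) := by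
          rw [mul_assoc, mul_div_assoc', ← exp_add, add_neg_cancel, exp_zero, mul_one_div]
      _ ≤ φ ^ 2 * exp φ * expInt φ := by gcongr; exact exp_neg_div_one_add_le_expInt hφ
  have hgap : φ - 1 < φ ^ 2 / (1 + φ) := by
    rw [lt_div_iff₀ (by positivity)]
    nlinarith
  constructor <;> linarith
end
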